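/- arXiv:2307.14676 — 2 statements merged into one kernel-verified Lean document; each statement's English description precedes it below -/
import Mathlib

section
/- Let a and â be independent random variables each with Rayleigh density f(r) = 2r e^{−r²} (r ≥ 0), and let Z be independent of (a, â) with triangular density f_Z(z) = (2π − |z|)/(4π²) on [−2π, 2π]. Define the complex random variable α = a − â e^{iZ}. Then E[α] = √π/2 (as a real number) and E[|α − E[α]|²] = (8 − π)/4. -/
/-!
Write `W = e^{iZ}`, a unit-modulus phase independent of `(a, â)` with `E W = 0`: the triangular
density is even and `∫₀^{2π} (2π - z) cos z dz = 0`. Then `α - E a = (a - E a) - â W`, and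
independence kills both `E[â W]` and the cross term `2 (a - E a) â Re W` of `|α - E a|²`, so that
`E α = E a` and `E|α - E α|² = Var a + E â²`. The Rayleigh moments `E aⁿ = Γ(n/2 + 1)` give
`E a = √π/2` and `E a² = E â² = 1`, hence the variance `1 - π/4 + 1 = (8 - π)/4`.
-/

open MeasureTheory ProbabilityTheory Real

/-- The Rayleigh density f(r) = 2r e^{-r²} for r ≥ 0, 0 otherwise. -/
noncomputable def rayleighPdf (r : ℝ) : ℝ := if 0 ≤ r then 2 * r * Real.exp (-r^2) else 0

/-- The triangular density f_Z(z) = (2π - |z|)/(4π²) for |z| ≤ 2π, 0 otherwise. -/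
noncomputable def triangularPdf (z : ℝ) : ℝ := if |z| ≤ 2*π then (2*π - |z|)/(4*π^2) else 0

open Set

section LawWithDensity

variable {Ω α E : Type*} [MeasurableSpace Ω] [MeasurableSpace α] [NormedAddCommGroup E]
  [NormedSpace ℝ E] {P : Measure Ω} {ν : Measure α} {X : Ω → α} {p : α → ℝ} {g : α → E}

theorem integral_comp_of_map_eq_withDensity (hX : AEMeasurable X P) (hp : Measurable p)
    (hp0 : ∀ x, 0 ≤ p x) (hlaw : P.map X = ν.withDensity fun x => ENNReal.ofReal (p x))
    (hg : AEStronglyMeasurable g (P.map X)) :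
    ∫ ω, g (X ω) ∂P = ∫ x, p x • g x ∂ν := by
  rw [← integral_map hX hg, hlaw, integral_withDensity_eq_integral_toReal_smul
    hp.ennreal_ofReal (ae_of_all _ fun _ => ENNReal.ofReal_lt_top)]
  simp_rw [ENNReal.toReal_ofReal (hp0 _)]

theorem integrable_comp_iff_of_map_eq_withDensity (hX : AEMeasurable X P) (hp : Measurable p)
    (hp0 : ∀ x, 0 ≤ p x) (hlaw : P.map X = ν.withDensity fun x => ENNReal.ofReal (p x))
    (hg : AEStronglyMeasurable g (P.map X)) :
    Integrable (fun ω => g (X ω)) P ↔ Integrable (fun x => p x • g x) ν := by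
  rw [← Function.comp_def, ← integrable_map_measure hg hX, hlaw,
    integrable_withDensity_iff_integrable_smul' hp.ennreal_ofReal
      (ae_of_all _ fun _ => ENNReal.ofReal_lt_top)]
  simp_rw [ENNReal.toReal_ofReal (hp0 _)]

end LawWithDensity

section Rayleigh

lemma rayleighPdf_nonneg (r : ℝ) : 0 ≤ rayleighPdf r := by
  unfold rayleighPdf
  split_ifs <;> positivity

lemma measurable_rayleighPdf : Measurable rayleighPdf :=
  Measurable.ite measurableSet_Ici (by fun_prop) measurable_const

lemma rayleighPdf_mul_pow_eq_indicator (n : ℕ) :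
    (fun r => rayleighPdf r * r ^ n)
      = (Ioi 0).indicator fun r => 2 * (r ^ ((n + 1 : ℕ) : ℝ) * exp (-r ^ (2 : ℝ))) := by
  ext r
  rcases lt_trichotomy r 0 with hr | rfl | hr
  · simp [rayleighPdf, hr.not_ge, hr.not_gt]
  · simp [rayleighPdf]
  · simp only [rayleighPdf, if_pos hr.le, indicator_of_mem (mem_Ioi.2 hr), rpow_natCast,
      rpow_two]
    ring

lemma integrable_rayleighPdf_mul_pow (n : ℕ) : Integrable fun r => rayleighPdf r * r ^ n := by
  rw [rayleighPdf_mul_pow_eq_indicator, integrable_indicator_iff measurableSet_Ioi]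
  exact (integrableOn_rpow_mul_exp_neg_rpow (neg_one_lt_zero.trans_le (Nat.cast_nonneg _))
    two_pos).const_mul 2

lemma integral_rayleighPdf_mul_pow (n : ℕ) :
    ∫ r, rayleighPdf r * r ^ n = Gamma (n / 2 + 1) := by
  rw [rayleighPdf_mul_pow_eq_indicator, integral_indicator measurableSet_Ioi, integral_const_mul,
    integral_rpow_mul_exp_neg_rpow two_pos (neg_one_lt_zero.trans_le (Nat.cast_nonneg _))]
  push_cast
  ring_nf

variable {Ω : Type*} [MeasurableSpace Ω] {P : Measure Ω} {X : Ω → ℝ}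

lemma integrable_pow_of_map_eq_rayleigh (hX : Measurable X)
    (hlaw : P.map X = volume.withDensity fun r => ENNReal.ofReal (rayleighPdf r)) (n : ℕ) :
    Integrable (fun ω => X ω ^ n) P :=
  (integrable_comp_iff_of_map_eq_withDensity (g := fun r => r ^ n) hX.aemeasurable
    measurable_rayleighPdf rayleighPdf_nonneg hlaw (by fun_prop)).2
    (integrable_rayleighPdf_mul_pow n)

lemma integral_pow_of_map_eq_rayleigh (hX : Measurable X)
    (hlaw : P.map X = volume.withDensity fun r => ENNReal.ofReal (rayleighPdf r)) (n : ℕ) :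
    ∫ ω, X ω ^ n ∂P = Gamma (n / 2 + 1) :=
  (integral_comp_of_map_eq_withDensity (g := fun r => r ^ n) hX.aemeasurable
    measurable_rayleighPdf rayleighPdf_nonneg hlaw (by fun_prop)).trans
    (integral_rayleighPdf_mul_pow n)

lemma memLp_two_of_map_eq_rayleigh (hX : Measurable X)
    (hlaw : P.map X = volume.withDensity fun r => ENNReal.ofReal (rayleighPdf r)) :
    MemLp X 2 P :=
  (memLp_two_iff_integrable_sq hX.aestronglyMeasurable).2
    (integrable_pow_of_map_eq_rayleigh hX hlaw 2)

lemma integral_of_map_eq_rayleigh (hX : Measurable X)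
    (hlaw : P.map X = volume.withDensity fun r => ENNReal.ofReal (rayleighPdf r)) :
    ∫ ω, X ω ∂P = √π / 2 := by
  have h := integral_pow_of_map_eq_rayleigh hX hlaw 1
  rw [Nat.cast_one, Gamma_add_one (by norm_num), Gamma_one_half_eq] at h
  simp only [pow_one] at h
  rw [h]
  ring

lemma integral_sq_of_map_eq_rayleigh (hX : Measurable X)
    (hlaw : P.map X = volume.withDensity fun r => ENNReal.ofReal (rayleighPdf r)) :
    ∫ ω, X ω ^ 2 ∂P = 1 := by
  simpa [one_add_one_eq_two] using integral_pow_of_map_eq_rayleigh hX hlaw 2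

end Rayleigh

section Triangular

lemma triangularPdf_nonneg (z : ℝ) : 0 ≤ triangularPdf z := by
  unfold triangularPdf
  split_ifs with h
  · exact div_nonneg (sub_nonneg.2 h) (by positivity)
  · exact le_rfl

lemma measurable_triangularPdf : Measurable triangularPdf :=
  Measurable.ite (measurableSet_le (by fun_prop) measurable_const) (by fun_prop) measurable_const

lemma triangularPdf_neg (z : ℝ) : triangularPdf (-z) = triangularPdf z := by
  simp [triangularPdf]

lemma triangularPdf_eq_zero_of_two_pi_lt_abs {z : ℝ} (hz : 2 * π < |z|) : triangularPdf z = 0 :=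
  if_neg hz.not_ge

lemma integrable_triangularPdf : Integrable triangularPdf := by
  have h : triangularPdf
      = (Icc (-(2 * π)) (2 * π)).indicator fun z => (2 * π - |z|) / (4 * π ^ 2) := by
    ext z
    simp only [triangularPdf, indicator, mem_Icc, ← abs_le]
  rw [h, integrable_indicator_iff measurableSet_Icc]
  exact (by fun_prop : Continuous fun z : ℝ => (2 * π - |z|) / (4 * π ^ 2)).integrableOn_Icc

lemma integral_two_pi_sub_mul_cos : ∫ z in (0)..(2 * π), (2 * π - z) * cos z = 0 := by
  have hderiv (z : ℝ) :
      HasDerivAt (fun z => (2 * π - z) * sin z - cos z) ((2 * π - z) * cos z) z := by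
    refine ((((hasDerivAt_id' z).const_sub (2 * π)).mul (hasDerivAt_sin z)).sub
      (hasDerivAt_cos z)).congr_deriv ?_
    ring
  rw [intervalIntegral.integral_eq_sub_of_hasDerivAt (fun z _ => hderiv z)
    (by apply Continuous.intervalIntegrable; fun_prop)]
  simp

lemma integral_triangularPdf_mul_cos : ∫ z, triangularPdf z * cos z = 0 := by
  have heven : (fun z => triangularPdf z * cos z) = fun z => triangularPdf |z| * cos |z| := by
    ext z
    rw [cos_abs]
    rcases abs_choice z with h | h <;> rw [h]
    rw [triangularPdf_neg]
  have h2π : 0 ≤ 2 * π := by positivity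
  have hsupp : ∫ z in Ioi 0, triangularPdf z * cos z
      = ∫ z in Ioc 0 (2 * π), triangularPdf z * cos z :=
    setIntegral_eq_of_subset_of_forall_sdiff_eq_zero measurableSet_Ioi Ioc_subset_Ioi_self
      fun z ⟨hz0, hz⟩ => by
        have hlt : 2 * π < |z| := by
          rw [abs_of_pos hz0]
          exact lt_of_not_ge fun h => hz ⟨hz0, h⟩
        rw [triangularPdf_eq_zero_of_two_pi_lt_abs hlt, zero_mul]
  have hinterval : ∫ z in (0)..(2 * π), triangularPdf z * cos z
      = (∫ z in (0)..(2 * π), (2 * π - z) * cos z) / (4 * π ^ 2) := by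
    rw [← intervalIntegral.integral_div]
    refine intervalIntegral.integral_congr fun z hz => ?_
    rw [uIcc_of_le h2π] at hz
    simp only [triangularPdf, abs_of_nonneg hz.1, if_pos hz.2]
    ring
  rw [heven, integral_comp_abs (f := fun z => triangularPdf z * cos z), hsupp,
    ← intervalIntegral.integral_of_le h2π, hinterval, integral_two_pi_sub_mul_cos]
  simp

lemma integral_triangularPdf_mul_sin : ∫ z, triangularPdf z * sin z = 0 := by
  have h := integral_neg_eq_self (fun z => triangularPdf z * sin z) volume
  simp only [triangularPdf_neg, sin_neg, mul_neg, integral_neg] at h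
  linarith

lemma integral_triangularPdf_smul_exp_I_mul :
    ∫ z, triangularPdf z • Complex.exp (Complex.I * z) = 0 := by
  have hcos : Integrable fun z => triangularPdf z * cos z :=
    integrable_triangularPdf.mul_bdd continuous_cos.aestronglyMeasurable
      (ae_of_all _ fun z => abs_cos_le_one z)
  have hsin : Integrable fun z => triangularPdf z * sin z :=
    integrable_triangularPdf.mul_bdd continuous_sin.aestronglyMeasurable
      (ae_of_all _ fun z => abs_sin_le_one z)
  have hsplit (z : ℝ) : triangularPdf z • Complex.exp (Complex.I * z)
      = ((triangularPdf z * cos z : ℝ) : ℂ) + ((triangularPdf z * sin z : ℝ) : ℂ) * Complex.I := by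
    rw [mul_comm, Complex.exp_mul_I, Complex.real_smul, ← Complex.ofReal_cos,
      ← Complex.ofReal_sin]
    push_cast
    ring
  simp_rw [hsplit]
  rw [integral_add hcos.ofReal (hsin.ofReal.mul_const _), integral_mul_const,
    integral_complex_ofReal, integral_complex_ofReal, integral_triangularPdf_mul_cos,
    integral_triangularPdf_mul_sin]
  simp

end Triangular

section RandomPhase

variable {Ω : Type*} [MeasurableSpace Ω] {P : Measure Ω} {A B : Ω → ℝ} {W : Ω → ℂ}

theorem integral_ofReal_sub_mul_eq_integral (hA : Integrable A P) (hB : Integrable B P)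
    (hW : AEStronglyMeasurable W P) (hW1 : ∀ ω, ‖W ω‖ = 1) (hBW : IndepFun B W P)
    (hW0 : ∫ ω, W ω ∂P = 0) :
    ∫ ω, ((A ω : ℂ) - B ω * W ω) ∂P = ((∫ ω, A ω ∂P : ℝ) : ℂ) := by
  have hBW' : IndepFun (fun ω => (B ω : ℂ)) W P :=
    hBW.comp Complex.measurable_ofReal measurable_id
  have hprod : ∫ ω, (B ω : ℂ) * W ω ∂P = 0 := by
    rw [hBW'.integral_fun_mul_eq_mul_integral hB.ofReal.aestronglyMeasurable hW, hW0, mul_zero]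
  have hBW_int : Integrable (fun ω => (B ω : ℂ) * W ω) P :=
    hB.ofReal.mul_bdd hW (ae_of_all _ fun ω => (hW1 ω).le)
  have hA_int : Integrable (fun ω => (A ω : ℂ)) P := hA.ofReal
  rw [integral_sub hA_int hBW_int, hprod, sub_zero, integral_complex_ofReal]

lemma norm_ofReal_sub_mul_sq {w : ℂ} (hw : ‖w‖ = 1) (x b : ℝ) :
    ‖(x : ℂ) - b * w‖ ^ 2 = x ^ 2 + b ^ 2 - 2 * (x * b * w.re) := by
  rw [Complex.sq_norm, Complex.normSq_sub, map_mul, Complex.normSq_ofReal, Complex.normSq_ofReal,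
    ← Complex.sq_norm w, hw]
  simp only [map_mul, Complex.conj_ofReal, Complex.re_ofReal_mul, Complex.conj_re]
  ring

theorem integral_norm_ofReal_sub_mul_sub_integral_sq [IsFiniteMeasure P] (hA : MemLp A 2 P)
    (hB : MemLp B 2 P) (hW : AEStronglyMeasurable W P) (hW1 : ∀ ω, ‖W ω‖ = 1)
    (hABW : IndepFun (fun ω => (A ω, B ω)) W P) (hW0 : ∫ ω, W ω ∂P = 0) :
    ∫ ω, ‖((A ω : ℂ) - B ω * W ω) - ((∫ ω, A ω ∂P : ℝ) : ℂ)‖ ^ 2 ∂P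
      = variance A P + ∫ ω, B ω ^ 2 ∂P := by
  set c := ∫ ω, A ω ∂P
  have hA' : MemLp (fun ω => A ω - c) 2 P := hA.sub (memLp_const c)
  have hcross : Integrable (fun ω => (A ω - c) * B ω) P := hA'.integrable_mul hB
  have hcrossW : Integrable (fun ω => (A ω - c) * B ω * (W ω).re) P :=
    hcross.mul_bdd hW.re (ae_of_all _ fun ω => (Complex.abs_re_le_norm _).trans (hW1 ω).le)
  have hindep : IndepFun (fun ω => (A ω - c) * B ω) (fun ω => (W ω).re) P :=
    hABW.comp (φ := fun x : ℝ × ℝ => (x.1 - c) * x.2) (by fun_prop) Complex.measurable_re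
  have hWint : Integrable W P := .of_bound hW 1 (ae_of_all _ fun ω => (hW1 ω).le)
  have hre0 : ∫ ω, (W ω).re ∂P = 0 := by simpa [hW0] using integral_re hWint
  have hcross0 : ∫ ω, (A ω - c) * B ω * (W ω).re ∂P = 0 := by
    rw [hindep.integral_fun_mul_eq_mul_integral hcross.aestronglyMeasurable hW.re, hre0,
      mul_zero]
  have hpoint (ω : Ω) : ‖((A ω : ℂ) - B ω * W ω) - (c : ℂ)‖ ^ 2
      = (A ω - c) ^ 2 + B ω ^ 2 - 2 * ((A ω - c) * B ω * (W ω).re) := by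
    rw [sub_right_comm, ← Complex.ofReal_sub, norm_ofReal_sub_mul_sq (hW1 ω)]
  have hsum : Integrable (fun ω => (A ω - c) ^ 2 + B ω ^ 2) P :=
    hA'.integrable_sq.add hB.integrable_sq
  simp_rw [hpoint]
  rw [integral_sub hsum (hcrossW.const_mul 2),
    integral_add hA'.integrable_sq hB.integrable_sq, integral_const_mul, hcross0,
    variance_eq_integral hA.aemeasurable]
  ring

end RandomPhase

theorem mean_variance_of_channel_difference_general
    {Ω : Type*} [MeasureSpace Ω] [IsProbabilityMeasure (ℙ : Measure Ω)]
    (a ahat Z : Ω → ℝ) (ha : Measurable a) (hahat : Measurable ahat) (hZ : Measurable Z)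
    (h_indepZ : IndepFun (fun ω => (a ω, ahat ω)) Z ℙ)
    (halaw : Measure.map a ℙ = volume.withDensity (fun r => ENNReal.ofReal (rayleighPdf r)))
    (hahatlaw : Measure.map ahat ℙ = volume.withDensity (fun r => ENNReal.ofReal (rayleighPdf r)))
    (hZlaw : Measure.map Z ℙ = volume.withDensity (fun z => ENNReal.ofReal (triangularPdf z))) :
    (∫ ω, ((a ω : ℂ) - (ahat ω : ℂ) * Complex.exp (Complex.I * (Z ω : ℂ))) ∂ℙ)
        = ((Real.sqrt π / 2 : ℝ) : ℂ) ∧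
    (∫ ω, ‖(((a ω : ℂ) - (ahat ω : ℂ) * Complex.exp (Complex.I * (Z ω : ℂ)))
        - ∫ ω', ((a ω' : ℂ) - (ahat ω' : ℂ) * Complex.exp (Complex.I * (Z ω' : ℂ))) ∂ℙ)‖ ^ 2 ∂ℙ)
      = (8 - π)/4 := by
  set W : Ω → ℂ := fun ω => Complex.exp (Complex.I * Z ω)
  have hW : AEStronglyMeasurable W ℙ := by fun_prop
  have hW1 (ω : Ω) : ‖W ω‖ = 1 := by
    rw [show W ω = Complex.exp (Z ω * Complex.I) by rw [mul_comm],
      Complex.norm_exp_ofReal_mul_I]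
  have hW0 : ∫ ω, W ω = 0 :=
    (integral_comp_of_map_eq_withDensity hZ.aemeasurable measurable_triangularPdf
      triangularPdf_nonneg hZlaw (by fun_prop)).trans integral_triangularPdf_smul_exp_I_mul
  have ha2 := memLp_two_of_map_eq_rayleigh ha halaw
  have hahat2 := memLp_two_of_map_eq_rayleigh hahat hahatlaw
  have hindep : IndepFun (fun ω => (a ω, ahat ω)) W ℙ :=
    h_indepZ.comp (φ := id) (ψ := fun z : ℝ => Complex.exp (Complex.I * z)) measurable_id
      (by fun_prop)
  have hmean : ∫ ω, ((a ω : ℂ) - ahat ω * W ω) = ((√π / 2 : ℝ) : ℂ) := by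
    rw [integral_ofReal_sub_mul_eq_integral (ha2.integrable one_le_two)
      (hahat2.integrable one_le_two) hW hW1 (hindep.comp measurable_snd measurable_id) hW0,
      integral_of_map_eq_rayleigh ha halaw]
  refine ⟨hmean, ?_⟩
  rw [hmean, ← integral_of_map_eq_rayleigh ha halaw,
    integral_norm_ofReal_sub_mul_sub_integral_sq ha2 hahat2 hW hW1 hindep hW0,
    variance_eq_sub ha2]
  simp only [Pi.pow_apply]
  rw [integral_sq_of_map_eq_rayleigh ha halaw, integral_of_map_eq_rayleigh ha halaw,
    integral_sq_of_map_eq_rayleigh hahat hahatlaw, div_pow, sq_sqrt pi_pos.le]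
  ring

/-- For a, â independent Rayleigh random variables and Z independent of (a, â) with the
triangular density, the complex random variable α = a - â e^{iZ} has mean √π/2 and
variance E[|α - E α|²] = (8 - π)/4. -/
theorem mean_variance_of_channel_difference
    {Ω : Type*} [MeasureSpace Ω] [IsProbabilityMeasure (ℙ : Measure Ω)]
    (a ahat Z : Ω → ℝ) (ha : Measurable a) (hahat : Measurable ahat) (hZ : Measurable Z)
    (h_indep : IndepFun a ahat ℙ)
    (h_indepZ : IndepFun (fun ω => (a ω, ahat ω)) Z ℙ)
    (halaw : Measure.map a ℙ = volume.withDensity (fun r => ENNReal.ofReal (rayleighPdf r)))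
    (hahatlaw : Measure.map ahat ℙ = volume.withDensity (fun r => ENNReal.ofReal (rayleighPdf r)))
    (hZlaw : Measure.map Z ℙ = volume.withDensity (fun z => ENNReal.ofReal (triangularPdf z))) :
    (∫ ω, ((a ω : ℂ) - (ahat ω : ℂ) * Complex.exp (Complex.I * (Z ω : ℂ))) ∂ℙ)
        = ((Real.sqrt π / 2 : ℝ) : ℂ) ∧
    (∫ ω, ‖(((a ω : ℂ) - (ahat ω : ℂ) * Complex.exp (Complex.I * (Z ω : ℂ)))
        - ∫ ω', ((a ω' : ℂ) - (ahat ω' : ℂ) * Complex.exp (Complex.I * (Z ω' : ℂ))) ∂ℙ)‖ ^ 2 ∂ℙ)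
      = (8 - π)/4 :=
  mean_variance_of_channel_difference_general a ahat Z ha hahat hZ h_indepZ halaw hahatlaw hZlaw
end

section
/- (Lemma 1) Let L be a positive integer. Let (a_l)_{l=1}^L, (â_l)_{l=1}^L, (b_l)_{l=1}^L be mutually independent random variables, each with Rayleigh density f(r) = 2r e^{−r²} (r ≥ 0), and let (Z_l)_{l=1}^L be independent of them and of each other, each with triangular density f_Z(z) = (2π − |z|)/(4π²) on [−2π, 2π]. Define the complex random variable R = Σ_{l=1}^L b_l (a_l − â_l e^{iZ_l}). Then μ_R := E[R] = Lπ/4 and σ_R² := E[|R − E[R]|²] = L(32 − π²)/16. -/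
/-!
Write the summand as `T_l = b_l W_l` with `W_l = a_l - â_l e^{iZ_l}`; it is a function of the
`l`-th block `(a_l, â_l, b_l, Z_l)`, so the `T_l` are independent and their complex variances add.
The triangular density periodizes to the uniform density `1 / 2π` on `[0, 2π]`, so
`E e^{iZ} = 0`. Hence `â e^{iZ}` is centred and independent of `a`, which gives `E W = E a` and
`E |W|² = E a² + E â²`. The Rayleigh moments are `E r^n = Γ(n/2 + 1)`, so `E r = √π / 2` and
`E r² = 1`; therefore `E T_l = π / 4`, `E |T_l|² = E b² · E |W|² = 2` and
`Var T_l = 2 - π² / 16`.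
-/

open MeasureTheory ProbabilityTheory Real

open Set

noncomputable def rayleighMeasure : Measure ℝ :=
  volume.withDensity fun r => ENNReal.ofReal (rayleighPdf r)

noncomputable def triangularMeasure : Measure ℝ :=
  volume.withDensity fun z => ENNReal.ofReal (triangularPdf z)

lemma integral_withDensity_ofReal {α E : Type*} [MeasurableSpace α] {μ : Measure α}
    [NormedAddCommGroup E] [NormedSpace ℝ E] {f : α → ℝ} (hf : Measurable f) (hf₀ : ∀ x, 0 ≤ f x)
    (g : α → E) :
    ∫ x, g x ∂μ.withDensity (fun x => ENNReal.ofReal (f x)) = ∫ x, f x • g x ∂μ := by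
  rw [integral_withDensity_eq_integral_toReal_smul hf.ennreal_ofReal
    (.of_forall fun _ => ENNReal.ofReal_lt_top)]
  simp only [ENNReal.toReal_ofReal (hf₀ _)]

lemma integral_rayleighMeasure {E : Type*} [NormedAddCommGroup E] [NormedSpace ℝ E] (g : ℝ → E) :
    ∫ x, g x ∂rayleighMeasure = ∫ x in Ioi 0, (2 * x * exp (-x ^ 2)) • g x := by
  rw [rayleighMeasure, integral_withDensity_ofReal measurable_rayleighPdf rayleighPdf_nonneg,
    ← setIntegral_eq_integral_of_forall_compl_eq_zero fun x hx => ?_]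
  · exact setIntegral_congr_fun measurableSet_Ioi fun x hx => by
      simp [rayleighPdf, (mem_Ioi.1 hx).le]
  · simp only [rayleighPdf]
    split_ifs with h
    · simp [le_antisymm (not_lt.1 hx) h]
    · simp

lemma integral_pow_rayleighMeasure (n : ℕ) :
    ∫ x, x ^ n ∂rayleighMeasure = Gamma (n / 2 + 1) := by
  have h := integral_rpow_mul_exp_neg_rpow (p := 2) (q := n + 1) two_pos
    (by linarith [n.cast_nonneg (α := ℝ)])
  rw [integral_rayleighMeasure]
  calc ∫ x in Ioi 0, (2 * x * exp (-x ^ 2)) • x ^ n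
      = 2 * ∫ x in Ioi (0:ℝ), x ^ ((n : ℝ) + 1) * exp (-x ^ (2 : ℝ)) := by
        rw [← integral_const_mul]
        refine setIntegral_congr_fun measurableSet_Ioi fun x hx => ?_
        simp only [smul_eq_mul, rpow_add hx, rpow_natCast, rpow_one, rpow_two]
        ring
    _ = Gamma (n / 2 + 1) := by rw [h]; ring_nf

lemma integral_triangularMeasure_of_periodic {E : Type*} [NormedAddCommGroup E] [NormedSpace ℝ E]
    {g : ℝ → E} (hg : Function.Periodic g (2 * π)) (hgc : Continuous g) :
    ∫ x, g x ∂triangularMeasure = (2 * π)⁻¹ • ∫ x in 0..2 * π, g x := by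
  set f : ℝ → E := fun x => ((2 * π - |x|) / (4 * π ^ 2)) • g x
  have hfc : Continuous f := by fun_prop
  have hπ : 0 < π := pi_pos
  have hsupp : ∫ x, g x ∂triangularMeasure = ∫ x in -(2 * π)..2 * π, f x := by
    rw [triangularMeasure, integral_withDensity_ofReal measurable_triangularPdf
      triangularPdf_nonneg, intervalIntegral.integral_of_le (by linarith),
      ← setIntegral_eq_integral_of_forall_compl_eq_zero fun x hx => ?_]
    · refine setIntegral_congr_fun measurableSet_Ioc fun x hx => ?_
      simp [f, triangularPdf, abs_le.2 ⟨hx.1.le, hx.2⟩]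
    · simp only [triangularPdf]
      split_ifs with h
      · obtain rfl : x = -(2 * π) := by
          obtain ⟨h₁, h₂⟩ := abs_le.1 h
          by_contra hne
          exact hx ⟨lt_of_le_of_ne h₁ (Ne.symm hne), h₂⟩
        simp [abs_of_pos hπ]
      · simp
  -- Shifted by `2π`, the rising half of the triangle and the falling half add up to `1 / 2π`.
  have hshift : ∫ x in -(2 * π)..0, f x = ∫ x in 0..2 * π, f (x - 2 * π) := by
    simp [intervalIntegral.integral_comp_sub_right]
  rw [hsupp, ← intervalIntegral.integral_add_adjacent_intervals (b := 0)
    (hfc.intervalIntegrable _ _) (hfc.intervalIntegrable _ _), hshift,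
    ← intervalIntegral.integral_add (f := fun x => f (x - 2 * π))
      ((hfc.comp (continuous_sub_right _)).intervalIntegrable _ _) (hfc.intervalIntegrable _ _),
    ← intervalIntegral.integral_smul]
  refine intervalIntegral.integral_congr fun x hx => ?_
  rw [uIcc_of_le (by linarith)] at hx
  have hx' : x - 2 * π ≤ 0 := by linarith [hx.2]
  simp only [f, hg.sub_eq, ← add_smul, abs_of_nonneg hx.1, abs_of_nonpos hx']
  congr 1
  field_simp
  ring

lemma integral_exp_I_mul_triangularMeasure :
    ∫ x, Complex.exp (Complex.I * x) ∂triangularMeasure = 0 := by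
  have hper : Function.Periodic (fun x : ℝ => Complex.exp (Complex.I * x)) (2 * π) := by
    intro x
    simpa [mul_comm Complex.I] using Complex.exp_mul_I_periodic x
  rw [integral_triangularMeasure_of_periodic hper (by fun_prop),
    integral_exp_mul_complex Complex.I_ne_zero]
  simp [mul_comm Complex.I, Complex.exp_two_pi_mul_I]

noncomputable def complexVariance {Ω : Type*} [MeasurableSpace Ω] (X : Ω → ℂ) (μ : Measure Ω) :
    ℝ :=
  ∫ ω, ‖X ω - μ[X]‖ ^ 2 ∂μ

-- `x = (a, â, b, Z)`, in the order of the coordinates in `lemma1_mean_variance_of_R`.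
noncomputable def fadingTerm (x : Fin 4 → ℝ) : ℂ :=
  x 2 * (x 0 - x 1 * Complex.exp (Complex.I * x 3))

lemma measurable_fadingTerm : Measurable fadingTerm := by
  unfold fadingTerm
  fun_prop

lemma norm_ofReal_mul_exp_I_mul (r z : ℝ) : ‖(r : ℂ) * Complex.exp (Complex.I * z)‖ = |r| := by
  rw [norm_mul, mul_comm Complex.I, Complex.norm_exp_ofReal_mul_I, Complex.norm_real, mul_one,
    Real.norm_eq_abs]

namespace ProbabilityTheory

section

variable {Ω : Type*} {mΩ : MeasurableSpace Ω} {μ : Measure Ω}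

lemma HasLaw.integral_pow_rayleigh {X : Ω → ℝ} (hX : HasLaw X rayleighMeasure μ) (n : ℕ) :
    ∫ ω, X ω ^ n ∂μ = Gamma (n / 2 + 1) :=
  (hX.integral_comp (f := fun x => x ^ n) (by fun_prop)).trans (integral_pow_rayleighMeasure n)

lemma HasLaw.integral_rayleigh {X : Ω → ℝ} (hX : HasLaw X rayleighMeasure μ) :
    μ[X] = √π / 2 := by
  have h := hX.integral_pow_rayleigh 1
  simp only [pow_one, Nat.cast_one] at h
  rw [h, Gamma_add_one (by norm_num), Gamma_one_half_eq]
  ring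

lemma HasLaw.integral_sq_rayleigh {X : Ω → ℝ} (hX : HasLaw X rayleighMeasure μ) :
    ∫ ω, X ω ^ 2 ∂μ = 1 := by
  simpa [one_add_one_eq_two] using hX.integral_pow_rayleigh 2

lemma HasLaw.memLp_two_rayleigh {X : Ω → ℝ} (hX : HasLaw X rayleighMeasure μ) : MemLp X 2 μ :=
  (memLp_two_iff_integrable_sq hX.aemeasurable.aestronglyMeasurable).2
    (.of_integral_ne_zero (by simp [hX.integral_sq_rayleigh]))

lemma HasLaw.integral_exp_I_mul_triangular {Z : Ω → ℝ} (hZ : HasLaw Z triangularMeasure μ) :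
    ∫ ω, Complex.exp (Complex.I * Z ω) ∂μ = 0 :=
  (hZ.integral_comp (f := fun x : ℝ => Complex.exp (Complex.I * x)) (by fun_prop)).trans
    integral_exp_I_mul_triangularMeasure

lemma _root_.MeasureTheory.MemLp.complex_re {p : ENNReal} {X : Ω → ℂ} (hX : MemLp X p μ) :
    MemLp (fun ω => (X ω).re) p μ :=
  hX.re

lemma _root_.MeasureTheory.MemLp.complex_im {p : ENNReal} {X : Ω → ℂ} (hX : MemLp X p μ) :
    MemLp (fun ω => (X ω).im) p μ :=
  hX.im

lemma integral_complex_re {X : Ω → ℂ} (hX : Integrable X μ) :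
    ∫ ω, (X ω).re ∂μ = (μ[X]).re :=
  integral_re hX

lemma integral_complex_im {X : Ω → ℂ} (hX : Integrable X μ) :
    ∫ ω, (X ω).im ∂μ = (μ[X]).im :=
  integral_im hX

lemma IndepFun.integral_norm_mul_sq {X Y : Ω → ℂ} (h : IndepFun X Y μ)
    (hX : AEStronglyMeasurable X μ) (hY : AEStronglyMeasurable Y μ) :
    ∫ ω, ‖X ω * Y ω‖ ^ 2 ∂μ = (∫ ω, ‖X ω‖ ^ 2 ∂μ) * ∫ ω, ‖Y ω‖ ^ 2 ∂μ := by
  simp only [norm_mul, mul_pow]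
  exact (h.comp (measurable_norm.pow_const 2) (measurable_norm.pow_const 2)
    ).integral_fun_mul_eq_mul_integral (hX.norm.pow 2) (hY.norm.pow 2)

lemma IndepFun.memLp_two_mul {X Y : Ω → ℂ} (hX : MemLp X 2 μ) (hY : MemLp Y 2 μ)
    (h : IndepFun X Y μ) : MemLp (X * Y) 2 μ := by
  refine (memLp_two_iff_integrable_sq_norm (hX.1.mul hY.1)).2 ?_
  simp only [Pi.mul_apply, norm_mul, mul_pow]
  exact (h.comp (measurable_norm.pow_const 2) (measurable_norm.pow_const 2)).integrable_mul
    ((memLp_two_iff_integrable_sq_norm hX.1).1 hX) ((memLp_two_iff_integrable_sq_norm hY.1).1 hY)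

lemma memLp_ofReal_mul_exp_I_mul {A Z : Ω → ℝ} (hA : MemLp A 2 μ) (hZ : AEMeasurable Z μ) :
    MemLp (fun ω => (A ω : ℂ) * Complex.exp (Complex.I * Z ω)) 2 μ := by
  have hA' := hA.aestronglyMeasurable.aemeasurable
  exact hA.of_le (by fun_prop : AEMeasurable _ μ).aestronglyMeasurable
    (.of_forall fun ω => by rw [norm_ofReal_mul_exp_I_mul, Real.norm_eq_abs])

lemma IndepFun.integral_ofReal_mul_exp_I_mul_eq_zero {A Z : Ω → ℝ} (h : IndepFun A Z μ)
    (hA : AEMeasurable A μ) (hZ : HasLaw Z triangularMeasure μ) :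
    ∫ ω, (A ω : ℂ) * Complex.exp (Complex.I * Z ω) ∂μ = 0 := by
  have h' : IndepFun (fun ω => (A ω : ℂ)) (fun ω => Complex.exp (Complex.I * Z ω)) μ :=
    h.comp Complex.measurable_ofReal
      (by fun_prop : Measurable fun z : ℝ => Complex.exp (Complex.I * z))
  have hZ' := hZ.aemeasurable
  rw [h'.integral_fun_mul_eq_mul_integral (by fun_prop : AEMeasurable _ μ).aestronglyMeasurable
    (by fun_prop : AEMeasurable _ μ).aestronglyMeasurable, hZ.integral_exp_I_mul_triangular,
    mul_zero]

lemma iIndepFun.indepFun_comp_row {ι κ 𝓧 β γ : Type*} [Fintype κ] {m𝓧 : MeasurableSpace 𝓧}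
    {mβ : MeasurableSpace β} {mγ : MeasurableSpace γ} {f : ι × κ → Ω → 𝓧} (h : iIndepFun f μ)
    (hf : ∀ p, Measurable (f p)) {i j : ι} (hij : i ≠ j) {φ : (κ → 𝓧) → β} {ψ : (κ → 𝓧) → γ}
    (hφ : Measurable φ) (hψ : Measurable ψ) :
    IndepFun (fun ω => φ fun k => f (i, k) ω) (fun ω => ψ fun k => f (j, k) ω) μ := by
  classical
  have hdisj : Disjoint ({i} ×ˢ Finset.univ : Finset (ι × κ)) ({j} ×ˢ Finset.univ) := by
    simp [Finset.disjoint_left, hij.symm]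
  exact (h.indepFun_finset _ _ hdisj hf).comp
    (φ := fun x => φ fun k => x ⟨(i, k), by simp⟩) (ψ := fun x => ψ fun k => x ⟨(j, k), by simp⟩)
    (hφ.comp (measurable_pi_lambda _ fun k => measurable_pi_apply _))
    (hψ.comp (measurable_pi_lambda _ fun k => measurable_pi_apply _))

end

section

variable {Ω : Type*} {mΩ : MeasurableSpace Ω} {μ : Measure Ω} [IsFiniteMeasure μ]
  {X Y : Ω → ℂ}

lemma complexVariance_eq_variance_re_add_variance_im (hX : MemLp X 2 μ) :
    complexVariance X μ = Var[fun ω => (X ω).re; μ] + Var[fun ω => (X ω).im; μ] := by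
  have hre₂ : Integrable (fun ω => ((X ω).re - ∫ ω, (X ω).re ∂μ) ^ 2) μ :=
    (hX.complex_re.sub (memLp_const _)).integrable_sq
  have him₂ : Integrable (fun ω => ((X ω).im - ∫ ω, (X ω).im ∂μ) ^ 2) μ :=
    (hX.complex_im.sub (memLp_const _)).integrable_sq
  rw [complexVariance, variance_eq_integral hX.complex_re.aemeasurable,
    variance_eq_integral hX.complex_im.aemeasurable, ← integral_add hre₂ him₂]
  congr 1 with ω
  rw [Complex.sq_norm, Complex.normSq_apply, Complex.sub_re, Complex.sub_im,
    ← integral_complex_re (hX.integrable one_le_two),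
    ← integral_complex_im (hX.integrable one_le_two)]
  ring

lemma IndepFun.complexVariance_sub (hX : MemLp X 2 μ) (hY : MemLp Y 2 μ) (h : IndepFun X Y μ) :
    complexVariance (X - Y) μ = complexVariance X μ + complexVariance Y μ := by
  rw [complexVariance_eq_variance_re_add_variance_im (hX.sub hY),
    complexVariance_eq_variance_re_add_variance_im hX,
    complexVariance_eq_variance_re_add_variance_im hY]
  simp only [Pi.sub_apply, Complex.sub_re, Complex.sub_im]
  have hre : IndepFun (fun ω => (X ω).re) (fun ω => (Y ω).re) μ :=
    h.comp Complex.measurable_re Complex.measurable_re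
  have him : IndepFun (fun ω => (X ω).im) (fun ω => (Y ω).im) μ :=
    h.comp Complex.measurable_im Complex.measurable_im
  rw [variance_fun_sub hX.complex_re hY.complex_re, variance_fun_sub hX.complex_im hY.complex_im,
    hre.covariance_eq_zero hX.complex_re hY.complex_re,
    him.covariance_eq_zero hX.complex_im hY.complex_im]
  ring

lemma IndepFun.complexVariance_sum {ι : Type*} {X : ι → Ω → ℂ} {s : Finset ι}
    (hX : ∀ i ∈ s, MemLp (X i) 2 μ) (h : Set.Pairwise ↑s fun i j => IndepFun (X i) (X j) μ) :
    complexVariance (∑ i ∈ s, X i) μ = ∑ i ∈ s, complexVariance (X i) μ := by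
  have hre : (fun ω => ((∑ i ∈ s, X i) ω).re) = ∑ i ∈ s, fun ω => (X i ω).re := by
    ext ω; simp only [Finset.sum_apply, Complex.re_sum]
  have him : (fun ω => ((∑ i ∈ s, X i) ω).im) = ∑ i ∈ s, fun ω => (X i ω).im := by
    ext ω; simp only [Finset.sum_apply, Complex.im_sum]
  rw [complexVariance_eq_variance_re_add_variance_im (memLp_finsetSum' s hX), hre, him,
    IndepFun.variance_sum (fun i hi => (hX i hi).complex_re)
      (fun i hi j hj hij => (h hi hj hij).comp Complex.measurable_re Complex.measurable_re),
    IndepFun.variance_sum (fun i hi => (hX i hi).complex_im)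
      (fun i hi j hj hij => (h hi hj hij).comp Complex.measurable_im Complex.measurable_im),
    ← Finset.sum_add_distrib]
  exact Finset.sum_congr rfl fun i hi =>
    (complexVariance_eq_variance_re_add_variance_im (hX i hi)).symm

end

section

variable {Ω : Type*} {mΩ : MeasurableSpace Ω} {μ : Measure Ω} [IsProbabilityMeasure μ]
  {X Y : Ω → ℂ}

lemma complexVariance_eq_sub (hX : MemLp X 2 μ) :
    complexVariance X μ = ∫ ω, ‖X ω‖ ^ 2 ∂μ - ‖μ[X]‖ ^ 2 := by
  have hnorm : ∫ ω, ‖X ω‖ ^ 2 ∂μ = ∫ ω, (X ω).re ^ 2 ∂μ + ∫ ω, (X ω).im ^ 2 ∂μ := by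
    rw [← integral_add hX.complex_re.integrable_sq hX.complex_im.integrable_sq]
    congr 1 with ω
    rw [Complex.sq_norm, Complex.normSq_apply]
    ring
  rw [complexVariance_eq_variance_re_add_variance_im hX, variance_eq_sub hX.complex_re,
    variance_eq_sub hX.complex_im, hnorm, Complex.sq_norm, Complex.normSq_apply,
    ← integral_complex_re (hX.integrable one_le_two),
    ← integral_complex_im (hX.integrable one_le_two)]
  simp only [Pi.pow_apply]
  ring

lemma IndepFun.integral_norm_sub_sq_of_integral_eq_zero (hX : MemLp X 2 μ) (hY : MemLp Y 2 μ)
    (h : IndepFun X Y μ) (hY₀ : μ[Y] = 0) :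
    ∫ ω, ‖X ω - Y ω‖ ^ 2 ∂μ = ∫ ω, ‖X ω‖ ^ 2 ∂μ + ∫ ω, ‖Y ω‖ ^ 2 ∂μ := by
  have h_var := h.complexVariance_sub hX hY
  rw [complexVariance_eq_sub (hX.sub hY), complexVariance_eq_sub hX, complexVariance_eq_sub hY]
    at h_var
  simp only [Pi.sub_apply] at h_var
  rw [integral_sub (hX.integrable one_le_two) (hY.integrable one_le_two), hY₀, sub_zero,
    norm_zero] at h_var
  linarith

lemma integral_sub_ofReal_mul_exp_I_mul {A Â Z : Ω → ℝ} (hA : HasLaw A rayleighMeasure μ)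
    (hÂ : HasLaw Â rayleighMeasure μ) (hZ : HasLaw Z triangularMeasure μ) (hÂZ : IndepFun Â Z μ) :
    ∫ ω, ((A ω : ℂ) - Â ω * Complex.exp (Complex.I * Z ω)) ∂μ = ((√π / 2 : ℝ) : ℂ) := by
  refine (integral_sub (hA.memLp_two_rayleigh.ofReal.integrable one_le_two)
    ((memLp_ofReal_mul_exp_I_mul hÂ.memLp_two_rayleigh hZ.aemeasurable).integrable one_le_two)
    ).trans ?_
  rw [hÂZ.integral_ofReal_mul_exp_I_mul_eq_zero hÂ.aemeasurable hZ, sub_zero,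
    integral_complex_ofReal, hA.integral_rayleigh]

lemma integral_norm_sub_ofReal_mul_exp_I_mul_sq {A Â Z : Ω → ℝ}
    (hA : HasLaw A rayleighMeasure μ) (hÂ : HasLaw Â rayleighMeasure μ)
    (hZ : HasLaw Z triangularMeasure μ)
    (hAY : IndepFun (fun ω => (A ω : ℂ)) (fun ω => Â ω * Complex.exp (Complex.I * Z ω)) μ)
    (hÂZ : IndepFun Â Z μ) :
    ∫ ω, ‖(A ω : ℂ) - Â ω * Complex.exp (Complex.I * Z ω)‖ ^ 2 ∂μ = 2 := by
  have hA₂ : MemLp (fun ω => (A ω : ℂ)) 2 μ := hA.memLp_two_rayleigh.ofReal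
  refine (hAY.integral_norm_sub_sq_of_integral_eq_zero hA₂
    (memLp_ofReal_mul_exp_I_mul hÂ.memLp_two_rayleigh hZ.aemeasurable)
    (hÂZ.integral_ofReal_mul_exp_I_mul_eq_zero hÂ.aemeasurable hZ)).trans ?_
  simp only [norm_ofReal_mul_exp_I_mul, Complex.norm_real, Real.norm_eq_abs, sq_abs,
    hA.integral_sq_rayleigh, hÂ.integral_sq_rayleigh]
  norm_num

lemma memLp_integral_complexVariance_fadingTerm {X : Fin 4 → Ω → ℝ} (hX : iIndepFun X μ)
    (hXm : ∀ j, Measurable (X j))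
    (h₀ : HasLaw (X 0) rayleighMeasure μ) (h₁ : HasLaw (X 1) rayleighMeasure μ)
    (h₂ : HasLaw (X 2) rayleighMeasure μ) (h₃ : HasLaw (X 3) triangularMeasure μ) :
    MemLp (fun ω => fadingTerm fun j => X j ω) 2 μ ∧
      ∫ ω, fadingTerm (fun j => X j ω) ∂μ = ((π / 4 : ℝ) : ℂ) ∧
      complexVariance (fun ω => fadingTerm fun j => X j ω) μ = 2 - π ^ 2 / 16 := by
  set B : Ω → ℂ := fun ω => X 2 ω
  set W : Ω → ℂ := fun ω => X 0 ω - X 1 ω * Complex.exp (Complex.I * X 3 ω)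
  change MemLp (B * W) 2 μ ∧ μ[B * W] = _ ∧ complexVariance (B * W) μ = _
  have hBW : IndepFun B W μ :=
    (hX.indepFun_finset {2} {0, 1, 3} (by decide) hXm).comp
      (φ := fun x : ({2} : Finset (Fin 4)) → ℝ => (x ⟨2, by simp⟩ : ℂ))
      (ψ := fun x : ({0, 1, 3} : Finset (Fin 4)) → ℝ =>
        (x ⟨0, by simp⟩ : ℂ) - x ⟨1, by simp⟩ * Complex.exp (Complex.I * x ⟨3, by simp⟩))
      (by fun_prop) (by fun_prop)
  have hAY : IndepFun (fun ω => (X 0 ω : ℂ))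
      (fun ω => X 1 ω * Complex.exp (Complex.I * X 3 ω)) μ :=
    (hX.indepFun_finset {0} {1, 3} (by decide) hXm).comp
      (φ := fun x : ({0} : Finset (Fin 4)) → ℝ => (x ⟨0, by simp⟩ : ℂ))
      (ψ := fun x : ({1, 3} : Finset (Fin 4)) → ℝ =>
        (x ⟨1, by simp⟩ : ℂ) * Complex.exp (Complex.I * x ⟨3, by simp⟩))
      (by fun_prop) (by fun_prop)
  have h₁₃ : IndepFun (X 1) (X 3) μ := hX.indepFun (by decide)
  have hB : MemLp B 2 μ := h₂.memLp_two_rayleigh.ofReal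
  have hW : MemLp W 2 μ := h₀.memLp_two_rayleigh.ofReal.sub
    (memLp_ofReal_mul_exp_I_mul h₁.memLp_two_rayleigh (hXm 3).aemeasurable)
  have hEB₂ : ∫ ω, ‖B ω‖ ^ 2 ∂μ = 1 := by
    simp only [B, Complex.norm_real, Real.norm_eq_abs, sq_abs, h₂.integral_sq_rayleigh]
  have hmean : μ[B * W] = ((π / 4 : ℝ) : ℂ) := by
    rw [hBW.integral_mul_eq_mul_integral hB.1 hW.1, integral_complex_ofReal, h₂.integral_rayleigh,
      integral_sub_ofReal_mul_exp_I_mul h₀ h₁ h₃ h₁₃, ← Complex.ofReal_mul, div_mul_div_comm,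
      mul_self_sqrt pi_pos.le]
    norm_num
  have hBWm := hBW.memLp_two_mul hB hW
  refine ⟨hBWm, hmean, ?_⟩
  rw [complexVariance_eq_sub hBWm, hmean, Pi.mul_def, hBW.integral_norm_mul_sq hB.1 hW.1, hEB₂,
    integral_norm_sub_ofReal_mul_exp_I_mul_sq h₀ h₁ h₃ hAY h₁₃, Complex.norm_real,
    Real.norm_eq_abs, abs_of_pos (by positivity)]
  ring

end

end ProbabilityTheory

theorem lemma1_mean_variance_of_R_general
    {Ω : Type*} [MeasureSpace Ω] [IsProbabilityMeasure (ℙ : Measure Ω)]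
    (L : ℕ)
    (a ahat b Z : Fin L → Ω → ℝ)
    (ha : ∀ l, Measurable (a l)) (hahat : ∀ l, Measurable (ahat l))
    (hb : ∀ l, Measurable (b l)) (hZ : ∀ l, Measurable (Z l))
    (h_indep : iIndepFun
      (fun p : Fin L × Fin 4 => ![a p.1, ahat p.1, b p.1, Z p.1] p.2) ℙ)
    (halaw : ∀ l, Measure.map (a l) ℙ
      = volume.withDensity (fun r => ENNReal.ofReal (rayleighPdf r)))
    (hahatlaw : ∀ l, Measure.map (ahat l) ℙ
      = volume.withDensity (fun r => ENNReal.ofReal (rayleighPdf r)))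
    (hblaw : ∀ l, Measure.map (b l) ℙ
      = volume.withDensity (fun r => ENNReal.ofReal (rayleighPdf r)))
    (hZlaw : ∀ l, Measure.map (Z l) ℙ
      = volume.withDensity (fun z => ENNReal.ofReal (triangularPdf z)))
    (R : Ω → ℂ)
    (hR : R = fun ω => ∑ l : Fin L,
      (b l ω : ℂ) * ((a l ω : ℂ) - (ahat l ω : ℂ) * Complex.exp (Complex.I * (Z l ω : ℂ)))) :
    (∫ ω, R ω ∂ℙ) = ((L * π / 4 : ℝ) : ℂ) ∧
    (∫ ω, ‖R ω - ∫ ω', R ω' ∂ℙ‖ ^ 2 ∂ℙ) = L * (32 - π^2) / 16 := by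
  set F : Fin L × Fin 4 → Ω → ℝ := fun p => ![a p.1, ahat p.1, b p.1, Z p.1] p.2
  have hF : ∀ p, Measurable (F p) := by
    rintro ⟨l, j⟩
    fin_cases j
    exacts [ha l, hahat l, hb l, hZ l]
  set T : Fin L → Ω → ℂ := fun l ω => fadingTerm fun j => F (l, j) ω
  have hRT : R = ∑ l, T l := by
    ext ω
    simp [hR, T, F, fadingTerm, Finset.sum_apply]
  have hT (l : Fin L) : MemLp (T l) 2 ℙ ∧ ℙ[T l] = ((π / 4 : ℝ) : ℂ) ∧
      complexVariance (T l) ℙ = 2 - π ^ 2 / 16 :=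
    memLp_integral_complexVariance_fadingTerm (h_indep.precomp (Prod.mk_right_injective l))
      (fun j => hF (l, j))
      ⟨(ha l).aemeasurable, halaw l⟩ ⟨(hahat l).aemeasurable, hahatlaw l⟩
      ⟨(hb l).aemeasurable, hblaw l⟩ ⟨(hZ l).aemeasurable, hZlaw l⟩
  have hmean : ∫ ω, R ω ∂ℙ = ((L * π / 4 : ℝ) : ℂ) := by
    rw [hRT]
    simp only [Finset.sum_apply]
    rw [integral_finsetSum _ fun l _ => (hT l).1.integrable one_le_two]
    simp only [(hT _).2.1, Finset.sum_const, Finset.card_univ, Fintype.card_fin, nsmul_eq_mul]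
    push_cast
    ring
  refine ⟨hmean, ?_⟩
  change complexVariance R ℙ = _
  rw [hRT, IndepFun.complexVariance_sum (fun l _ => (hT l).1) fun l _ k _ hlk =>
    h_indep.indepFun_comp_row hF hlk measurable_fadingTerm measurable_fadingTerm]
  simp only [(hT _).2.2, Finset.sum_const, Finset.card_univ, Fintype.card_fin, nsmul_eq_mul]
  ring

/-- Lemma 1: for mutually independent Rayleigh magnitudes a_l, â_l, b_l and triangular
phase differences Z_l, the complex random variable
R = Σ_{l} b_l (a_l - â_l e^{i Z_l}) has mean Lπ/4 and variance
E[|R - E R|²] = L(32 - π²)/16. -/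
theorem lemma1_mean_variance_of_R
    {Ω : Type*} [MeasureSpace Ω] [IsProbabilityMeasure (ℙ : Measure Ω)]
    (L : ℕ) (hL : 0 < L)
    (a ahat b Z : Fin L → Ω → ℝ)
    (ha : ∀ l, Measurable (a l)) (hahat : ∀ l, Measurable (ahat l))
    (hb : ∀ l, Measurable (b l)) (hZ : ∀ l, Measurable (Z l))
    (h_indep : iIndepFun
      (fun p : Fin L × Fin 4 => ![a p.1, ahat p.1, b p.1, Z p.1] p.2) ℙ)
    (halaw : ∀ l, Measure.map (a l) ℙ
      = volume.withDensity (fun r => ENNReal.ofReal (rayleighPdf r)))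
    (hahatlaw : ∀ l, Measure.map (ahat l) ℙ
      = volume.withDensity (fun r => ENNReal.ofReal (rayleighPdf r)))
    (hblaw : ∀ l, Measure.map (b l) ℙ
      = volume.withDensity (fun r => ENNReal.ofReal (rayleighPdf r)))
    (hZlaw : ∀ l, Measure.map (Z l) ℙ
      = volume.withDensity (fun z => ENNReal.ofReal (triangularPdf z)))
    (R : Ω → ℂ)
    (hR : R = fun ω => ∑ l : Fin L,
      (b l ω : ℂ) * ((a l ω : ℂ) - (ahat l ω : ℂ) * Complex.exp (Complex.I * (Z l ω : ℂ)))) :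
    (∫ ω, R ω ∂ℙ) = ((L * π / 4 : ℝ) : ℂ) ∧
    (∫ ω, ‖R ω - ∫ ω', R ω' ∂ℙ‖ ^ 2 ∂ℙ) = L * (32 - π^2) / 16 :=
  lemma1_mean_variance_of_R_general L a ahat b Z ha hahat hb hZ h_indep halaw hahatlaw hblaw hZlaw R
    hR
end
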